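/- Let X be a standard k-configuration in P^2 of type (a,b,c) with a ≥ 3 (so 3 ≤ a < b < c). Then the Waldschmidt constant of I_X equals 3. Moreover, X satisfies Chudnovsky's inequality: for all m > 0, α(I_X^{(m)})/m ≥ (α(I_X) + 1)/2. -/

import Mathlib

open MvPolynomial

noncomputable section

/-- The homogeneous ideal of a point of `ℙ²` with homogeneous coordinate vector `P`. -/
def pointIdeal (k : Type) [Field k] (P : Fin 3 → k) : Ideal (MvPolynomial (Fin 3) k) :=
  Ideal.span {f : MvPolynomial (Fin 3) k | f.IsHomogeneous 1 ∧ eval P f = 0}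

/-- The `t`-th symbolic power of the ideal of the point set `X` in `ℙ²`. -/
def symbolicPower (k : Type) [Field k] (X : Set (Fin 3 → k)) (t : ℕ) :
    Ideal (MvPolynomial (Fin 3) k) :=
  ⨅ P ∈ X, pointIdeal k P ^ t

/-- The initial degree `α(I)` of a (homogeneous) ideal: the least degree of a nonzero
homogeneous element of `I`. -/
def initDeg (k : Type) [Field k] (I : Ideal (MvPolynomial (Fin 3) k)) : ℕ :=
  sInf {d | ∃ f ∈ I, f ≠ 0 ∧ f.IsHomogeneous d}

/-- `waldIs k X w` says that the Waldschmidt constant of `I_X` exists and equals `w`,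
i.e. `α(I_X^{(t)})/t → w` as `t → ∞`. -/
def waldIs (k : Type) [Field k] (X : Set (Fin 3 → k)) (w : ℝ) : Prop :=
  Filter.Tendsto (fun t : ℕ => (initDeg k (symbolicPower k X t) : ℝ) / t)
    Filter.atTop (nhds w)

/-- Two vectors (or forms) define the same projective object. -/
def projEq (k : Type) [Field k] {M : Type*} [SMul k M] (x y : M) : Prop :=
  ∃ c : k, c ≠ 0 ∧ c • x = y

/-- A line in `ℙ²` is (the zero locus of) a nonzero linear form. -/
def IsLine (k : Type) [Field k] (l : MvPolynomial (Fin 3) k) : Prop :=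
  l ≠ 0 ∧ l.IsHomogeneous 1

/-- The point `P` lies on the line defined by the linear form `l`. -/
def onLine (k : Type) [Field k] (P : Fin 3 → k) (l : MvPolynomial (Fin 3) k) : Prop :=
  eval P l = 0

/-- Three points of `ℙ²` lie on a common line. -/
def collinear3 (k : Type) [Field k] (P Q R : Fin 3 → k) : Prop :=
  ∃ l, IsLine k l ∧ onLine k P l ∧ onLine k Q l ∧ onLine k R l

/-- The vectors in `X` are nonzero and represent pairwise distinct points of `ℙ²`. -/
def goodPoints (k : Type) [Field k] (X : Set (Fin 3 → k)) : Prop :=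
  (∀ P ∈ X, P ≠ 0) ∧ ∀ P ∈ X, ∀ Q ∈ X, P ≠ Q → ¬ projEq k P Q

/-- The degree-`d` part `[I]_d` of an ideal, as a `k`-vector space. -/
def degPart (k : Type) [Field k] (I : Ideal (MvPolynomial (Fin 3) k)) (d : ℕ) :
    Submodule k (MvPolynomial (Fin 3) k) :=
  (I.restrictScalars k) ⊓ homogeneousSubmodule (Fin 3) k d

/-- `n` points `[1 : j : h]`, `0 ≤ j ≤ n-1`, on the line `x₂ = h·x₀`. -/
def stdRow (k : Type) [Field k] (h n : ℕ) : Set (Fin 3 → k) :=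
  {P | ∃ j < n, P = ![1, (j : k), (h : k)]}

/-- A standard k-configuration of type `(a)`. -/
def std1 (k : Type) [Field k] (a : ℕ) : Set (Fin 3 → k) := stdRow k 0 a

/-- A standard k-configuration of type `(a, b)`. -/
def std2 (k : Type) [Field k] (a b : ℕ) : Set (Fin 3 → k) :=
  stdRow k 1 a ∪ stdRow k 0 b

/-- A standard k-configuration of type `(a, b, c)`. -/
def std3 (k : Type) [Field k] (a b c : ℕ) : Set (Fin 3 → k) :=
  stdRow k 2 a ∪ stdRow k 1 b ∪ stdRow k 0 c

/-- The multiplicity of the curve `f = 0` at the point `P`. -/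
def multAt (k : Type) [Field k] (P : Fin 3 → k) (f : MvPolynomial (Fin 3) k) : ℕ :=
  sSup {m | f ∈ pointIdeal k P ^ m}

/-!
Write `L_h = x₂ - h x₀` for the line carrying the row of height `h`. The product of the `s`
row lines, raised to the `t`-th power, vanishes to order `t` at every point, so
`α(I_X^{(t)}) ≤ s t`. Conversely, let `f ≠ 0` be a form of degree `d < s (t + 1)` vanishing to
order `t + 1` on `X`. Restricted to a row with `n ≥ s` points, `f` becomes a polynomial of degree
`≤ d` with `n` roots of multiplicity `t + 1`, so it vanishes identically and `L_h ∣ f`. Hence the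
product of the row lines divides `f`; as every point of `X` lies on exactly one row line, the
quotient has degree `d - s` and vanishes to order `t` on `X`, and induction on `t` gives
`α(I_X^{(t)}) = s t`. For the configuration of type `(a, b, c)` with `3 ≤ a < b < c` this is
`3 t`, so `α̂(I_X) = 3` and `α(I_X^{(m)}) / m = 3 ≥ (3 + 1) / 2`.
-/

namespace MvPolynomial

variable {σ R : Type*}

lemma homogeneousComponent_mul_of_isHomogeneous_left [CommSemiring R] {p : MvPolynomial σ R}
    {m : ℕ} (hp : p.IsHomogeneous m) (q : MvPolynomial σ R) (i : ℕ) :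
    homogeneousComponent (m + i) (p * q) = p * homogeneousComponent i q := by
  let _ := gradedAlgebra (σ := σ) (R := R)
  have := DirectSum.coe_decompose_mul_add_of_left_mem (homogeneousSubmodule σ R) (j := i)
    (b := q) ((mem_homogeneousSubmodule m p).mpr hp)
  simpa only [DirectSum.decompose, Equiv.coe_fn_mk, decomposition.decompose'_apply] using this

lemma IsHomogeneous.of_mul_left [CommRing R] [IsDomain R] {p q : MvPolynomial σ R} {m n : ℕ}
    (hp : p.IsHomogeneous m) (hp0 : p ≠ 0) (hpq : (p * q).IsHomogeneous n) :
    q.IsHomogeneous (n - m) := by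
  intro d hd
  suffices d.degree = n - m by rwa [Finsupp.degree_eq_weight_one] at this
  have hcomp : p * homogeneousComponent d.degree q ≠ 0 := by
    refine mul_ne_zero hp0 fun h ↦ hd ?_
    simpa [coeff_homogeneousComponent] using congrArg (coeff d) h
  rw [← homogeneousComponent_mul_of_isHomogeneous_left hp,
    homogeneousComponent_of_mem ((mem_homogeneousSubmodule n _).mpr hpq)] at hcomp
  have : m + d.degree = n := by by_contra h; exact hcomp (if_neg h)
  omega

lemma dvd_sub_aeval [CommRing R] (g : σ → MvPolynomial σ R) {q : MvPolynomial σ R}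
    (hg : ∀ i, q ∣ X i - g i) (f : MvPolynomial σ R) : q ∣ f - aeval g f := by
  rw [← Ideal.mem_span_singleton, ← Ideal.Quotient.eq]
  have : (Ideal.Quotient.mkₐ R (Ideal.span {q})).comp (aeval g) = Ideal.Quotient.mkₐ R _ := by
    refine algHom_ext fun i ↦ ?_
    simpa [Ideal.Quotient.eq, Ideal.mem_span_singleton] using (dvd_sub_comm.mp (hg i))
  exact (congrArg (· f) this).symm

lemma natDegree_aeval_le_totalDegree [CommSemiring R] (g : σ → Polynomial R)
    (hg : ∀ i, (g i).natDegree ≤ 1) (f : MvPolynomial σ R) :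
    (aeval g f).natDegree ≤ f.totalDegree := by
  classical
  conv_lhs => rw [f.as_sum, map_sum]
  refine Polynomial.natDegree_sum_le_of_forall_le _ _ fun d hd ↦ ?_
  rw [aeval_monomial, ← Polynomial.C_eq_algebraMap]
  refine (Polynomial.natDegree_C_mul_le _ _).trans ?_
  refine (Polynomial.natDegree_prod_le _ _).trans ?_
  refine le_trans ?_ (le_totalDegree hd)
  refine (Finset.sum_le_sum fun i _ ↦ Polynomial.natDegree_pow_le_of_le (d i) (hg i)).trans ?_
  simp [Finsupp.sum]

variable [CommRing R]

/-- `taylorAt P f = f(P + T • x)`. Its `T`-adic order is the order of vanishing of `f` at the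
affine point `P`; it is additive in `f` since `T` is prime. -/
def taylorAt (P : σ → R) : MvPolynomial σ R →ₐ[R] Polynomial (MvPolynomial σ R) :=
  aeval fun i ↦ Polynomial.C (C (P i)) + Polynomial.X * Polynomial.C (X i)

lemma coeff_zero_taylorAt (P : σ → R) (f : MvPolynomial σ R) :
    (taylorAt P f).coeff 0 = C (eval P f) := by
  induction f using MvPolynomial.induction_on <;> simp_all [taylorAt]

lemma X_dvd_taylorAt_iff {P : σ → R} {f : MvPolynomial σ R} :
    Polynomial.X ∣ taylorAt P f ↔ eval P f = 0 := by
  rw [Polynomial.X_dvd_iff, coeff_zero_taylorAt, C_eq_zero]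

def vanishingOrder (P : σ → R) (f : MvPolynomial σ R) : ℕ∞ :=
  emultiplicity Polynomial.X (taylorAt P f)

lemma vanishingOrder_eq_zero_iff {P : σ → R} {f : MvPolynomial σ R} :
    vanishingOrder P f = 0 ↔ eval P f ≠ 0 := by
  rw [vanishingOrder, emultiplicity_eq_zero, X_dvd_taylorAt_iff]

lemma vanishingOrder_mul [IsDomain R] (P : σ → R) (f g : MvPolynomial σ R) :
    vanishingOrder P (f * g) = vanishingOrder P f + vanishingOrder P g := by
  rw [vanishingOrder, map_mul, emultiplicity_mul Polynomial.prime_X]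
  rfl

lemma vanishingOrder_prod [IsDomain R] {ι : Type*} (P : σ → R) (s : Finset ι)
    (f : ι → MvPolynomial σ R) :
    vanishingOrder P (∏ i ∈ s, f i) = ∑ i ∈ s, vanishingOrder P (f i) := by
  rw [vanishingOrder, map_prod, Finset.emultiplicity_prod Polynomial.prime_X]
  rfl

end MvPolynomial

section Rows

variable {k : Type*} [Field k]

def rowLine (h : k) : MvPolynomial (Fin 3) k := X 2 - C h * X 0

lemma rowLine_ne_zero (h : k) : rowLine h ≠ 0 := fun h0 ↦ by
  simpa [rowLine] using congrArg (eval ![0, 0, 1]) h0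

lemma isHomogeneous_rowLine (h : k) : (rowLine h).IsHomogeneous 1 :=
  (isHomogeneous_X k 2).sub (isHomogeneous_C_mul_X h 0)

lemma vanishingOrder_rowLine_self (j h : k) : vanishingOrder ![1, j, h] (rowLine h) = 1 := by
  have htaylor : taylorAt ![1, j, h] (rowLine h) = Polynomial.X * Polynomial.C (rowLine h) := by
    simp [taylorAt, rowLine]
    ring
  have hnot : ¬ Polynomial.X ∣ Polynomial.C (rowLine h) := by
    rw [Polynomial.X_dvd_iff, Polynomial.coeff_C_zero]
    exact rowLine_ne_zero h
  rw [vanishingOrder, htaylor, emultiplicity_mul Polynomial.prime_X,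
    emultiplicity_eq_zero.mpr hnot, add_zero]
  simpa using emultiplicity_pow_self_of_prime Polynomial.prime_X 1

lemma vanishingOrder_rowLine_of_ne {h h' : k} (hh : h' ≠ h) (j : k) :
    vanishingOrder ![1, j, h'] (rowLine h) = 0 := by
  rw [vanishingOrder_eq_zero_iff]
  simp [rowLine, sub_eq_zero, hh]

lemma isHomogeneous_prod_rowLine {ι : Type*} (g : ι → k) (S : Finset ι) :
    (∏ i ∈ S, rowLine (g i)).IsHomogeneous S.card := by
  simpa using IsHomogeneous.prod S _ (fun _ ↦ 1) fun i _ ↦ isHomogeneous_rowLine (g i)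

lemma prod_rowLine_ne_zero {ι : Type*} (g : ι → k) (S : Finset ι) :
    ∏ i ∈ S, rowLine (g i) ≠ 0 :=
  Finset.prod_ne_zero_iff.mpr fun i _ ↦ rowLine_ne_zero (g i)

def restrictRow (h : k) : MvPolynomial (Fin 3) k →ₐ[k] Polynomial k :=
  aeval ![1, Polynomial.X, Polynomial.C h]

lemma natDegree_restrictRow_le {h : k} {f : MvPolynomial (Fin 3) k} {d : ℕ}
    (hf : f.IsHomogeneous d) : (restrictRow h f).natDegree ≤ d :=
  (natDegree_aeval_le_totalDegree _ (fun i ↦ by fin_cases i <;> simp) f).trans hf.totalDegree_le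

lemma rowLine_dvd_of_restrictRow_eq_zero {h : k} {f : MvPolynomial (Fin 3) k} {d : ℕ}
    (hf : f.IsHomogeneous d) (h0 : restrictRow h f = 0) : rowLine h ∣ f := by
  -- `q` is a binary form dehomogenizing to `restrictRow h f`, and `f ≡ q(x₁, x₀)` modulo
  -- `rowLine h`.
  let q : MvPolynomial (Fin 2) k := aeval ![X 1, X 0, C h * X 1] f
  have hq : q.IsHomogeneous d := by
    simpa using hf.aeval _ (n := 1) fun i ↦ by
      fin_cases i <;> simp [isHomogeneous_X, isHomogeneous_C_mul_X]
  have hdehom : aeval ![Polynomial.X, 1] q = restrictRow h f := by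
    simp only [q, ← AlgHom.comp_apply, comp_aeval, restrictRow]
    congr 2
    ext i
    fin_cases i <;> simp
  have hq0 : q = 0 := by
    rw [← Polynomial.homogenize_eq_of_isHomogeneous hq (hdehom.trans h0),
      Polynomial.homogenize_zero]
  have hrho :
      (aeval ![X 0, X 1, C h * X 0] f : MvPolynomial (Fin 3) k) = aeval ![X 1, X 0] q := by
    simp only [q, ← AlgHom.comp_apply, comp_aeval]
    congr 2
    ext i
    fin_cases i <;> simp
  have hdvd : rowLine h ∣ f - aeval ![X 0, X 1, C h * X 0] f :=
    dvd_sub_aeval _ (fun i ↦ by fin_cases i <;> simp [rowLine]) f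
  rwa [hrho, hq0, map_zero, sub_zero] at hdvd

lemma X_sub_C_pow_dvd_restrictRow {j h : k} {f : MvPolynomial (Fin 3) k} {m : ℕ}
    (hv : (m : ℕ∞) ≤ vanishingOrder ![1, j, h] f) :
    (Polynomial.X - Polynomial.C j) ^ m ∣ restrictRow h f := by
  have hcomp : (Polynomial.aeval (Polynomial.X + Polynomial.C j)).comp (restrictRow h) =
      (Polynomial.mapAlgHom (aeval ![0, 1, 0])).comp (taylorAt ![1, j, h]) :=
    algHom_ext fun i ↦ by fin_cases i <;> simp [restrictRow, taylorAt, add_comm]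
  rw [Polynomial.X_sub_C_pow_dvd_iff, Polynomial.comp_eq_aeval, ← AlgHom.comp_apply, hcomp,
    AlgHom.comp_apply, Polynomial.coe_mapAlgHom]
  simpa using Polynomial.map_dvd (aeval ![(0 : k), 1, 0]).toRingHom
    (pow_dvd_of_le_emultiplicity hv)

lemma rowLine_dvd_of_le_vanishingOrder [CharZero k] {h : k} {n m d : ℕ}
    {f : MvPolynomial (Fin 3) k} (hf : f.IsHomogeneous d) (hd : d < n * m)
    (hv : ∀ j < n, (m : ℕ∞) ≤ vanishingOrder ![1, (j : k), h] f) : rowLine h ∣ f := by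
  refine rowLine_dvd_of_restrictRow_eq_zero hf ?_
  by_contra hne
  have hdvd : (∏ j ∈ Finset.range n, (Polynomial.X - Polynomial.C (j : k)) ^ m) ∣
      restrictRow h f :=
    Finset.prod_dvd_of_coprime
      (fun i _ j _ hij ↦ ((Polynomial.pairwise_coprime_X_sub_C Nat.cast_injective) hij).pow)
      (fun j hj ↦ X_sub_C_pow_dvd_restrictRow (hv j (Finset.mem_range.mp hj)))
  have hdeg := Polynomial.natDegree_le_of_dvd hdvd hne
  rw [Polynomial.natDegree_prod_of_monic _ _ fun j _ ↦ (Polynomial.monic_X_sub_C _).pow m] at hdeg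
  simp only [Polynomial.natDegree_pow, Polynomial.natDegree_X_sub_C, mul_one, Finset.sum_const,
    Finset.card_range, smul_eq_mul] at hdeg
  have := natDegree_restrictRow_le (h := h) hf
  omega

end Rows

section Configuration

variable {k : Type} [Field k] {s : ℕ}

lemma le_vanishingOrder_of_mem_pointIdeal_pow {P : Fin 3 → k}
    {f : MvPolynomial (Fin 3) k} {t : ℕ} (hf : f ∈ pointIdeal k P ^ t) :
    (t : ℕ∞) ≤ vanishingOrder P f := by
  rw [vanishingOrder, ← pow_dvd_iff_le_emultiplicity, ← Ideal.mem_span_singleton,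
    ← Ideal.span_singleton_pow]
  have hmap : (pointIdeal k P).map (taylorAt P) ≤ Ideal.span {Polynomial.X} := by
    rw [pointIdeal, Ideal.map_span, Ideal.span_le]
    rintro _ ⟨l, ⟨-, hl⟩, rfl⟩
    exact Ideal.mem_span_singleton.mpr (X_dvd_taylorAt_iff.mpr hl)
  exact Ideal.pow_right_mono hmap t (Ideal.map_pow (taylorAt P) _ t ▸ Ideal.mem_map_of_mem _ hf)

lemma rowLine_mem_pointIdeal (j h : k) : rowLine h ∈ pointIdeal k ![1, j, h] :=
  Ideal.subset_span ⟨isHomogeneous_rowLine h, by simp [rowLine]⟩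

def stdRows (k : Type) [Field k] (hgt n : Fin s → ℕ) : Set (Fin 3 → k) :=
  ⋃ i, stdRow k (hgt i) (n i)

lemma mem_symbolicPower_iff {Y : Set (Fin 3 → k)} {t : ℕ} {f : MvPolynomial (Fin 3) k} :
    f ∈ symbolicPower k Y t ↔ ∀ P ∈ Y, f ∈ pointIdeal k P ^ t := by
  simp [symbolicPower]

lemma prod_rowLine_pow_mem_symbolicPower (hgt n : Fin s → ℕ) (t : ℕ) :
    (∏ i, rowLine (hgt i : k)) ^ t ∈ symbolicPower k (stdRows k hgt n) t := by
  rw [mem_symbolicPower_iff]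
  rintro _ ⟨_, ⟨i, rfl⟩, j, -, rfl⟩
  have hdvd := Finset.dvd_prod_of_mem (fun i ↦ rowLine (hgt i : k)) (Finset.mem_univ i)
  exact Ideal.pow_mem_pow (Ideal.mem_of_dvd _ hdvd (rowLine_mem_pointIdeal _ _)) t

variable [CharZero k] {hgt : Fin s → ℕ}

lemma vanishingOrder_prod_rowLine (hinj : hgt.Injective) {n : Fin s → ℕ} {P : Fin 3 → k}
    (hP : P ∈ stdRows k hgt n) : vanishingOrder P (∏ i, rowLine (hgt i : k)) = 1 := by
  obtain ⟨_, ⟨i₀, rfl⟩, j, -, rfl⟩ := hP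
  rw [vanishingOrder_prod, Finset.sum_eq_single i₀ _ (by simp), vanishingOrder_rowLine_self]
  intro i _ hi
  exact vanishingOrder_rowLine_of_ne (by exact_mod_cast hinj.ne (Ne.symm hi)) _

lemma prod_rowLine_dvd (hinj : hgt.Injective) {n : Fin s → ℕ} {m d : ℕ}
    {f : MvPolynomial (Fin 3) k} (hf : f.IsHomogeneous d)
    (hv : ∀ P ∈ stdRows k hgt n, (m : ℕ∞) ≤ vanishingOrder P f) (S : Finset (Fin s))
    (hd : ∀ i ∈ S, d < n i * m) : ∏ i ∈ S, rowLine (hgt i : k) ∣ f := by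
  induction S using Finset.induction_on with
  | empty => simp
  | insert i S hi ih =>
    obtain ⟨g, rfl⟩ := ih fun i' hi' ↦ hd i' (Finset.mem_insert_of_mem hi')
    have hg := (isHomogeneous_prod_rowLine _ S).of_mul_left (prod_rowLine_ne_zero _ S) hf
    have hgi : rowLine (hgt i : k) ∣ g := by
      refine rowLine_dvd_of_le_vanishingOrder hg
        ((Nat.sub_le d _).trans_lt (hd i (Finset.mem_insert_self i S))) fun j hj ↦ ?_
      have hPi := hv ![1, j, hgt i] (Set.mem_iUnion.mpr ⟨i, j, hj, rfl⟩)
      rwa [vanishingOrder_mul, vanishingOrder_prod, Finset.sum_eq_zero, zero_add] at hPi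
      intro i' hi'
      have hne : (hgt i : k) ≠ hgt i' := by
        exact_mod_cast hinj.ne (ne_of_mem_of_not_mem hi' hi).symm
      exact vanishingOrder_rowLine_of_ne hne _
    rw [Finset.prod_insert hi, mul_comm]
    exact mul_dvd_mul_left _ hgi

lemma mul_le_of_le_vanishingOrder (hinj : hgt.Injective) {n : Fin s → ℕ} (hn : ∀ i, s ≤ n i)
    {t d : ℕ} {f : MvPolynomial (Fin 3) k} (hf0 : f ≠ 0) (hf : f.IsHomogeneous d)
    (hv : ∀ P ∈ stdRows k hgt n, (t : ℕ∞) ≤ vanishingOrder P f) : s * t ≤ d := by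
  induction t generalizing d f with
  | zero => simp
  | succ t ih =>
    by_contra! hd
    obtain ⟨g, rfl⟩ := prod_rowLine_dvd hinj hf hv (Finset.univ : Finset (Fin s)) fun i _ ↦
      hd.trans_le (Nat.mul_le_mul_right _ (hn i))
    have hL : (∏ i, rowLine (hgt i : k)).IsHomogeneous s := by
      simpa using isHomogeneous_prod_rowLine (fun i ↦ (hgt i : k)) Finset.univ
    have hg := hL.of_mul_left (prod_rowLine_ne_zero _ _) hf
    have hsd : s + (d - s) = d := (hL.mul hg).inj_right hf hf0
    have := ih (right_ne_zero_of_mul hf0) hg fun P hP ↦ by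
      have hPv := hv P hP
      rw [vanishingOrder_mul, vanishingOrder_prod_rowLine hinj hP] at hPv
      push_cast at hPv
      exact (ENat.add_le_add_iff_left ENat.one_ne_top).mp (add_comm (t : ℕ∞) 1 ▸ hPv)
    rw [Nat.mul_succ] at hd
    omega

theorem initDeg_symbolicPower_stdRows (hinj : hgt.Injective) {n : Fin s → ℕ}
    (hn : ∀ i, s ≤ n i) (t : ℕ) :
    initDeg k (symbolicPower k (stdRows k hgt n) t) = s * t := by
  have hmem :
      s * t ∈ {d | ∃ f ∈ symbolicPower k (stdRows k hgt n) t, f ≠ 0 ∧ f.IsHomogeneous d} := by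
    refine ⟨_, prod_rowLine_pow_mem_symbolicPower hgt n t,
      pow_ne_zero _ (prod_rowLine_ne_zero _ _), ?_⟩
    simpa using (isHomogeneous_prod_rowLine (fun i ↦ (hgt i : k)) Finset.univ).pow t
  refine le_antisymm (Nat.sInf_le hmem) (le_csInf ⟨_, hmem⟩ ?_)
  rintro d ⟨f, hf, hf0, hfd⟩
  exact mul_le_of_le_vanishingOrder hinj hn hf0 hfd fun P hP ↦
    le_vanishingOrder_of_mem_pointIdeal_pow (mem_symbolicPower_iff.mp hf P hP)

end Configuration

lemma std3_eq_stdRows (k : Type) [Field k] (a b c : ℕ) :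
    std3 k a b c = stdRows k ![2, 1, 0] ![a, b, c] := by
  ext P
  simp [std3, stdRows, Fin.exists_fin_succ, or_assoc]

theorem waldschmidt_std_abc_and_chudnovsky_general (k : Type) [Field k] [CharZero k]
    (a b c : ℕ) (ha : 3 ≤ a) (hab : a < b) (hbc : b < c) :
    waldIs k (std3 k a b c) 3 ∧
      ∀ m : ℕ, 0 < m →
        ((initDeg k (symbolicPower k (std3 k a b c) 1) : ℝ) + 1) / 2 ≤
          (initDeg k (symbolicPower k (std3 k a b c) m) : ℝ) / m := by
  have hinitDeg (t : ℕ) : initDeg k (symbolicPower k (std3 k a b c) t) = 3 * t := by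
    rw [std3_eq_stdRows]
    exact initDeg_symbolicPower_stdRows (by decide) (fun i ↦ by fin_cases i <;> simp <;> omega) t
  refine ⟨?_, fun m hm ↦ ?_⟩
  · refine tendsto_const_nhds.congr' ?_
    filter_upwards [Filter.eventually_ne_atTop 0] with t ht
    rw [hinitDeg, Nat.cast_mul, mul_div_cancel_right₀ _ (by exact_mod_cast ht)]
    norm_num
  · rw [hinitDeg, hinitDeg, Nat.cast_mul (3 : ℕ) m,
      mul_div_cancel_right₀ _ (by exact_mod_cast hm.ne')]
    norm_num

/-- a standard k-configuration of type `(a,b,c)` with `3 ≤ a < b < c` has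
Waldschmidt constant `3`, and satisfies Chudnovsky's inequality
`α(I_X^{(m)})/m ≥ (α(I_X)+1)/2` for all `m > 0`. -/
theorem waldschmidt_std_abc_and_chudnovsky (k : Type) [Field k] [IsAlgClosed k] [CharZero k]
    (a b c : ℕ) (ha : 3 ≤ a) (hab : a < b) (hbc : b < c) :
    waldIs k (std3 k a b c) 3 ∧
      ∀ m : ℕ, 0 < m →
        ((initDeg k (symbolicPower k (std3 k a b c) 1) : ℝ) + 1) / 2 ≤
          (initDeg k (symbolicPower k (std3 k a b c) m) : ℝ) / m :=
  waldschmidt_std_abc_and_chudnovsky_general k a b c ha hab hbc
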